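/- arXiv:1811.11906 — 2 statements merged into one kernel-verified Lean document; each statement's English description precedes it below -/
import Mathlib

section
/- There exists a constant C > 0 such that for every ε ∈ (0, 1], every cubic Hermite interpolant P of F on [−ε, ε], and every a ∈ [−ε, ε], one has ‖P''(a) − (1/(2ε)) • (g₊'(0) − g₋'(0))‖ ≤ C. -/
/-!
Since `P''` is affine, the Hermite data determine it:
`P''(a) = (P'(ε) - P'(-ε)) / (2ε) + 3a / (2ε³) • (ε • (P'(ε) + P'(-ε)) - (P(ε) - P(-ε)))`.
With the data of `F`, the first quotient differs from `(g₊'(0) - g₋'(0)) / (2ε)` by `O(1)` since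
`g₋'` and `g₊'` are Lipschitz near `0`. The second bracket is the defect of the trapezoid rule for
`∫_{-ε}^{ε} F'`; because `g₋(0) = g₊(0)` it splits into two first-order Taylor remainders of `g∓`
expanded at `∓ε`, so it is `O(ε²)`.
-/

open Set NNReal

section

variable {E : Type*} [NormedAddCommGroup E]

theorem LipschitzOnWith.norm_sub_le_mul_abs {f : ℝ → E} {s : Set ℝ} {K : ℝ≥0}
    (hf : LipschitzOnWith K f s) {x y : ℝ} (hx : x ∈ s) (hy : y ∈ s) :
    ‖f x - f y‖ ≤ K * |x - y| := by
  simpa [← dist_eq_norm, Real.dist_eq] using hf.dist_le_mul x hx y hy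

variable [NormedSpace ℝ E]

theorem LipschitzOnWith.norm_sub_sub_smul_le {f f' : ℝ → E} {s : Set ℝ} {K : ℝ≥0}
    (hs : Convex ℝ s) (hf : ∀ z ∈ s, HasDerivWithinAt f (f' z) s z)
    (hK : LipschitzOnWith K f' s) {x y : ℝ} (hx : x ∈ s) (hy : y ∈ s) :
    ‖f y - f x - (y - x) • f' x‖ ≤ K * (y - x) ^ 2 := by
  have hsub : uIcc x y ⊆ s := hs.ordConnected.uIcc_subset hx hy
  have hderiv : ∀ z ∈ uIcc x y,
      HasDerivWithinAt (fun z ↦ f z - z • f' x) (f' z - f' x) (uIcc x y) z := fun z hz ↦ by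
    simpa only [id_eq, one_smul] using
      ((hf z (hsub hz)).mono hsub).fun_sub ((hasDerivWithinAt_id z _).smul_const (f' x))
  have hbound : ∀ z ∈ uIcc x y, ‖f' z - f' x‖ ≤ K * |y - x| := fun z hz ↦
    calc ‖f' z - f' x‖ ≤ K * |z - x| := hK.norm_sub_le_mul_abs (hsub hz) hx
      _ ≤ K * |y - x| := mul_le_mul_of_nonneg_left (abs_sub_left_of_mem_uIcc hz) K.coe_nonneg
  calc ‖f y - f x - (y - x) • f' x‖ = ‖f y - y • f' x - (f x - x • f' x)‖ := by
        congr 1; module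
    _ ≤ K * |y - x| * ‖y - x‖ :=
        (convex_uIcc x y).norm_image_sub_le_of_norm_hasDerivWithin_le hderiv hbound
          left_mem_uIcc right_mem_uIcc
    _ = K * (y - x) ^ 2 := by rw [Real.norm_eq_abs, mul_assoc, ← sq, sq_abs]

theorem ContDiff.exists_lipschitzOnWith_deriv {g : ℝ → E} (hg : ContDiff ℝ 2 g) {s : Set ℝ}
    (hs : Convex ℝ s) (hs' : IsCompact s) : ∃ K, LipschitzOnWith K (deriv g) s :=
  ((hg.iterate_deriv' 1 1).contDiffOn).exists_lipschitzOnWith one_ne_zero hs hs'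

section Cubic

variable {P : ℝ → E} {c : Fin 4 → E}

theorem Fin.sum_univ_four_pow_smul (c : Fin 4 → E) (x : ℝ) :
    ∑ j : Fin 4, x ^ (j : ℕ) • c j = c 0 + x • c 1 + x ^ 2 • c 2 + x ^ 3 • c 3 := by
  simp [Fin.sum_univ_four]

theorem hasDerivAt_of_eq_cubic (hP : ∀ x, P x = ∑ j : Fin 4, x ^ (j : ℕ) • c j) (x : ℝ) :
    HasDerivAt P (c 1 + (2 * x) • c 2 + (3 * x ^ 2) • c 3) x := by
  have := (((hasDerivAt_const x (c 0)).fun_add ((hasDerivAt_id x).smul_const (c 1))).fun_add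
    ((hasDerivAt_pow 2 x).smul_const (c 2))).fun_add ((hasDerivAt_pow 3 x).smul_const (c 3))
  simp only [funext hP, Fin.sum_univ_four_pow_smul]
  convert this using 1
  simp only [id_eq]
  module

theorem deriv_eq_of_eq_cubic (hP : ∀ x, P x = ∑ j : Fin 4, x ^ (j : ℕ) • c j) :
    deriv P = fun x ↦ c 1 + (2 * x) • c 2 + (3 * x ^ 2) • c 3 :=
  funext fun x ↦ (hasDerivAt_of_eq_cubic hP x).deriv

theorem iteratedDeriv_two_eq_of_eq_cubic (hP : ∀ x, P x = ∑ j : Fin 4, x ^ (j : ℕ) • c j)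
    (x : ℝ) : iteratedDeriv 2 P x = (2 : ℝ) • c 2 + (6 * x) • c 3 := by
  have := ((hasDerivAt_const x (c 1)).fun_add
    (((hasDerivAt_id x).const_mul 2).smul_const (c 2))).fun_add
    (((hasDerivAt_pow 2 x).const_mul 3).smul_const (c 3))
  rw [iteratedDeriv_succ, iteratedDeriv_one, deriv_eq_of_eq_cubic hP]
  convert this.deriv using 1
  simp only [id_eq]
  module

theorem iteratedDeriv_two_eq_hermite (hP : ∀ x, P x = ∑ j : Fin 4, x ^ (j : ℕ) • c j)
    {ε : ℝ} (hε : ε ≠ 0) (a : ℝ) :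
    iteratedDeriv 2 P a = (1 / (2 * ε)) • (deriv P ε - deriv P (-ε))
      + (3 * a / (2 * ε ^ 3)) • (ε • (deriv P ε + deriv P (-ε)) - (P ε - P (-ε))) := by
  simp only [iteratedDeriv_two_eq_of_eq_cubic hP, deriv_eq_of_eq_cubic hP, hP,
    Fin.sum_univ_four_pow_smul]
  match_scalars <;> field_simp <;> ring

end Cubic

section Hermite

variable {gm gp : ℝ → E} {s : Set ℝ} {K : ℝ≥0} {ε : ℝ}

theorem norm_deriv_jump_sub_le (hm : LipschitzOnWith K (deriv gm) s)
    (hp : LipschitzOnWith K (deriv gp) s) (hneg : -ε ∈ s) (hzero : 0 ∈ s) (hpos : ε ∈ s) :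
    ‖(deriv gp ε - deriv gm (-ε)) - (deriv gp 0 - deriv gm 0)‖ ≤ 2 * K * |ε| := by
  calc ‖(deriv gp ε - deriv gm (-ε)) - (deriv gp 0 - deriv gm 0)‖
      = ‖(deriv gp ε - deriv gp 0) - (deriv gm (-ε) - deriv gm 0)‖ := by congr 1; abel
    _ ≤ ‖deriv gp ε - deriv gp 0‖ + ‖deriv gm (-ε) - deriv gm 0‖ := norm_sub_le _ _
    _ ≤ K * |ε - 0| + K * |-ε - 0| := by
        gcongr
        exacts [hp.norm_sub_le_mul_abs hpos hzero, hm.norm_sub_le_mul_abs hneg hzero]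
    _ = 2 * K * |ε| := by simp only [sub_zero, abs_neg]; ring

theorem norm_trapezoid_defect_le (hs : Convex ℝ s) (hgm : Differentiable ℝ gm)
    (hgp : Differentiable ℝ gp) (hm : LipschitzOnWith K (deriv gm) s)
    (hp : LipschitzOnWith K (deriv gp) s) (h0 : gm 0 = gp 0)
    (hneg : -ε ∈ s) (hzero : 0 ∈ s) (hpos : ε ∈ s) :
    ‖ε • (deriv gp ε + deriv gm (-ε)) - (gp ε - gm (-ε))‖ ≤ 2 * K * ε ^ 2 := by
  have tp := hp.norm_sub_sub_smul_le hs (fun z _ ↦ (hgp z).hasDerivAt.hasDerivWithinAt) hpos hzero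
  have tm := hm.norm_sub_sub_smul_le hs (fun z _ ↦ (hgm z).hasDerivAt.hasDerivWithinAt) hneg hzero
  calc ‖ε • (deriv gp ε + deriv gm (-ε)) - (gp ε - gm (-ε))‖
      = ‖(gp 0 - gp ε - (0 - ε) • deriv gp ε) - (gm 0 - gm (-ε) - (0 - -ε) • deriv gm (-ε))‖ := by
        rw [h0]; congr 1; module
    _ ≤ K * (0 - ε) ^ 2 + K * (0 - -ε) ^ 2 := (norm_sub_le _ _).trans (add_le_add tp tm)
    _ = 2 * K * ε ^ 2 := by ring

theorem norm_hermite_combination_le {U W : E} {ε a L : ℝ} (hε : 0 < ε) (ha : |a| ≤ ε)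
    (hU : ‖U‖ ≤ L * ε) (hW : ‖W‖ ≤ L * ε ^ 2) :
    ‖(1 / (2 * ε)) • U + (3 * a / (2 * ε ^ 3)) • W‖ ≤ 2 * L := by
  have hU' : ‖(1 / (2 * ε)) • U‖ ≤ L / 2 :=
    calc ‖(1 / (2 * ε)) • U‖ = 1 / (2 * ε) * ‖U‖ := by
          rw [norm_smul, Real.norm_of_nonneg (by positivity)]
      _ ≤ 1 / (2 * ε) * (L * ε) := by gcongr
      _ = L / 2 := by field_simp
  have hW' : ‖(3 * a / (2 * ε ^ 3)) • W‖ ≤ 3 * L / 2 :=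
    calc ‖(3 * a / (2 * ε ^ 3)) • W‖ = 3 * |a| / (2 * ε ^ 3) * ‖W‖ := by
          simp [norm_smul, abs_of_pos hε]
      _ ≤ 3 * ε / (2 * ε ^ 3) * (L * ε ^ 2) := by gcongr
      _ = 3 * L / 2 := by field_simp
  linarith [norm_add_le ((1 / (2 * ε)) • U) ((3 * a / (2 * ε ^ 3)) • W)]

end Hermite

end

/-- **Second-order estimate for cubic Hermite smoothing (Lemma `firstorder`, part 3).**
With `g₋, g₊, F` as before, there is `C > 0` such that for every `ε ∈ (0,1]`, every
cubic Hermite interpolant `P` of `F` on `[−ε, ε]`, and every `a ∈ [−ε, ε]`,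
`‖P''(a) − (1/(2ε)) • (g₊'(0) − g₋'(0))‖ ≤ C`. -/
theorem cubic_hermite_second_deriv_estimate
    {E : Type*} [NormedAddCommGroup E] [NormedSpace ℝ E]
    (gm gp : ℝ → E) (hgm : ContDiff ℝ 2 gm) (hgp : ContDiff ℝ 2 gp)
    (h0 : gm 0 = gp 0)
    (F : ℝ → E) (hFm : ∀ a : ℝ, a ≤ 0 → F a = gm a) (hFp : ∀ a : ℝ, 0 ≤ a → F a = gp a) :
    ∃ C > 0, ∀ ε ∈ Set.Ioc (0 : ℝ) 1, ∀ P : ℝ → E,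
      ((∃ c : Fin 4 → E, ∀ a : ℝ, P a = ∑ j : Fin 4, a ^ (j : ℕ) • c j) ∧
        P (-ε) = F (-ε) ∧ P ε = F ε ∧
        deriv P (-ε) = deriv gm (-ε) ∧ deriv P ε = deriv gp ε) →
      ∀ a ∈ Set.Icc (-ε) ε,
        ‖iteratedDeriv 2 P a - (1 / (2 * ε)) • (deriv gp 0 - deriv gm 0)‖ ≤ C := by
  obtain ⟨Km, hKm⟩ := hgm.exists_lipschitzOnWith_deriv (convex_Icc (-1 : ℝ) 1) isCompact_Icc
  obtain ⟨Kp, hKp⟩ := hgp.exists_lipschitzOnWith_deriv (convex_Icc (-1 : ℝ) 1) isCompact_Icc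
  have hm := hKm.weaken (le_add_right le_rfl : Km ≤ Km + Kp)
  have hp := hKp.weaken (le_add_left le_rfl : Kp ≤ Km + Kp)
  refine ⟨4 * ((Km + Kp : ℝ≥0) : ℝ) + 1, by positivity, ?_⟩
  rintro ε ⟨hε0, hε1⟩ P ⟨⟨c, hc⟩, hPm, hPp, hDm, hDp⟩ a ha
  have hneg : -ε ∈ Icc (-1 : ℝ) 1 := ⟨by linarith, by linarith⟩
  have hzero : (0 : ℝ) ∈ Icc (-1 : ℝ) 1 := ⟨by norm_num, by norm_num⟩
  have hpos : ε ∈ Icc (-1 : ℝ) 1 := ⟨by linarith, by linarith⟩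
  have hU := norm_deriv_jump_sub_le hm hp hneg hzero hpos
  have hW := norm_trapezoid_defect_le (convex_Icc _ _) (hgm.differentiable two_ne_zero)
    (hgp.differentiable two_ne_zero) hm hp h0 hneg hzero hpos
  rw [abs_of_pos hε0] at hU
  rw [iteratedDeriv_two_eq_hermite hc hε0.ne', hDm, hDp, hPm, hPp, hFm (-ε) (by linarith),
    hFp ε hε0.le, add_sub_right_comm, ← smul_sub]
  linarith [norm_hermite_combination_le hε0 (abs_le.mpr ha) hU hW]
end

section
/- There exists a constant C > 0 such that for every ε ∈ (0, 1], every quintic Hermite interpolant P of F on [−ε, ε], and every a ∈ [−ε, ε], one has ‖P'(a) − g₊'(0)‖ ≤ C·ε (note g₊'(0) = g₋'(0) is the common derivative of F at 0). -/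
/-!
Subtract the tangent line `w + x • v` of `F` at `0` (`w = g₊ 0`, `v = g₊' 0`) and rescale
`[-ε, ε]` to `[-1, 1]`: the quintic `R t = P (ε t) - w - (ε t) • v` then has Hermite data of size `O(ε²)` at `±1`
(the values by Taylor's theorem for `g±`, the first derivatives since `g±'` is Lipschitz near `0`,
the second derivatives since `g±''` is bounded). Quintic Hermite interpolation on `[-1, 1]` is a
fixed invertible linear map from the data to the coefficients, so `R' = O(ε²)` on `[-1, 1]`,
and `P' - v = ε⁻¹ R' (· / ε) = O(ε)` on `[-ε, ε]`.
-/

open Set Filter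

theorem iteratedDeriv_sum_pow_smul {𝕜 F : Type*} [NontriviallyNormedField 𝕜]
    [NormedAddCommGroup F] [NormedSpace 𝕜 F] {n : ℕ} (c : Fin n → F) (k : ℕ) (x : 𝕜) :
    iteratedDeriv k (fun x => ∑ j : Fin n, x ^ (j : ℕ) • c j) x =
      ∑ j : Fin n, ((j : ℕ).descFactorial k * x ^ ((j : ℕ) - k)) • c j := by
  simp (disch := fun_prop) only [iteratedDeriv_fun_sum, iteratedDeriv_smul_const,
    iteratedDeriv_pow]

section

variable {E : Type*} [NormedAddCommGroup E] [NormedSpace ℝ E]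

theorem norm_sum_smul_le {ι : Type*} [Fintype ι] (r : ι → ℝ) (y : ι → E) :
    ‖∑ i, r i • y i‖ ≤ ∑ i, |r i| * ‖y i‖ :=
  (norm_sum_le _ _).trans_eq (by simp only [norm_smul, Real.norm_eq_abs])

/-- Inverse of the matrix taking the coefficients of a quintic `p` to its Hermite data
`(p (-1), p 1, p' (-1), p' 1, p'' (-1), p'' 1)`. -/
noncomputable def hermiteInverse : Matrix (Fin 6) (Fin 6) ℝ :=
  (16 : ℝ)⁻¹ • !![  8,   8,  5, -5,  1,  1;
                  -15,  15, -7, -7, -1,  1;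
                    0,   0, -6,  6, -2, -2;
                   10, -10, 10, 10,  2, -2;
                    0,   0,  1, -1,  1,  1;
                   -3,   3, -3, -3, -1,  1]

theorem sum_mul_sum_abs_hermiteInverse :
    ∑ j : Fin 6, ((j : ℕ) : ℝ) * ∑ i, |hermiteInverse j i| = 37 / 2 := by
  simp only [hermiteInverse, Matrix.smul_apply, Matrix.of_apply, Matrix.cons_val,
    Fin.sum_univ_six, Fin.coe_ofNat_eq_mod, Nat.reduceMod, smul_eq_mul]
  norm_num

theorem norm_deriv_quintic_le_of_hermite_data (b : Fin 6 → E) {δ : ℝ}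
    (h : ∀ k ≤ 2, ∀ s ∈ ({-1, 1} : Set ℝ),
      ‖iteratedDeriv k (fun x => ∑ j : Fin 6, x ^ (j : ℕ) • b j) s‖ ≤ δ)
    {t : ℝ} (ht : |t| ≤ 1) :
    ‖deriv (fun x => ∑ j : Fin 6, x ^ (j : ℕ) • b j) t‖ ≤ 37 / 2 * δ := by
  set p := fun x : ℝ => ∑ j : Fin 6, x ^ (j : ℕ) • b j
  set y : Fin 6 → E := ![iteratedDeriv 0 p (-1), iteratedDeriv 0 p 1, iteratedDeriv 1 p (-1),
    iteratedDeriv 1 p 1, iteratedDeriv 2 p (-1), iteratedDeriv 2 p 1]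
  have hy : ∀ i, ‖y i‖ ≤ δ := by
    intro i
    fin_cases i <;> apply h <;> norm_num
  have hb : ∀ j, b j = ∑ i, hermiteInverse j i • y i := by
    intro j
    simp only [y, p, iteratedDeriv_sum_pow_smul]
    fin_cases j <;>
      simp only [Fin.reduceFinMk, hermiteInverse, Matrix.smul_apply, Matrix.of_apply,
        Matrix.cons_val, Fin.sum_univ_six, Fin.coe_ofNat_eq_mod, Nat.reduceMod, Nat.descFactorial,
        Nat.reduceSub, smul_eq_mul] <;>
      module
  calc ‖deriv p t‖ = ‖∑ j : Fin 6, ((j : ℕ) * t ^ ((j : ℕ) - 1)) • b j‖ := by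
        rw [← iteratedDeriv_one, iteratedDeriv_sum_pow_smul]
        simp only [Nat.descFactorial_one]
    _ ≤ ∑ j : Fin 6, |(j : ℕ) * t ^ ((j : ℕ) - 1)| * ‖b j‖ := norm_sum_smul_le _ _
    _ ≤ ∑ j : Fin 6, (j : ℕ) * ((∑ i, |hermiteInverse j i|) * δ) := by
        gcongr with j
        · rw [abs_mul, Nat.abs_cast, abs_pow]
          exact mul_le_of_le_one_right (by positivity) (pow_le_one₀ (abs_nonneg t) ht)
        · rw [hb j]
          exact (norm_sum_smul_le _ _).trans (by rw [Finset.sum_mul]; gcongr; exact hy _)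
    _ = (∑ j : Fin 6, (j : ℕ) * ∑ i, |hermiteInverse j i|) * δ := by
        simp only [Finset.sum_mul, mul_assoc]
    _ = 37 / 2 * δ := by rw [sum_mul_sum_abs_hermiteInverse]

theorem norm_deriv_quintic_sub_le_of_hermite_data {P : ℝ → E}
    (hP : ∃ c : Fin 6 → E, ∀ x, P x = ∑ j : Fin 6, x ^ (j : ℕ) • c j)
    {ε δ : ℝ} (hε : 0 < ε) (w v : E)
    (h : ∀ s ∈ ({-ε, ε} : Set ℝ), ‖P s - w - s • v‖ ≤ δ * s ^ 2 ∧
      ‖deriv P s - v‖ ≤ δ * |s| ∧ ‖iteratedDeriv 2 P s‖ ≤ δ)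
    {a : ℝ} (ha : a ∈ Icc (-ε) ε) :
    ‖deriv P a - v‖ ≤ 37 / 2 * δ * ε := by
  obtain ⟨c, hc⟩ := hP
  obtain rfl : P = _ := funext hc
  set b : Fin 6 → E := ![c 0 - w, ε • (c 1 - v), ε ^ 2 • c 2, ε ^ 3 • c 3, ε ^ 4 • c 4,
    ε ^ 5 • c 5]
  set R := fun t : ℝ => ∑ j : Fin 6, t ^ (j : ℕ) • b j
  have hR0 : ∀ s, R s = (∑ j : Fin 6, (ε * s) ^ (j : ℕ) • c j) - w - (ε * s) • v := by
    intro s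
    simp only [R, b, Fin.sum_univ_six, Fin.coe_ofNat_eq_mod, Nat.reduceMod, Matrix.cons_val]
    module
  have hR1 : ∀ s, deriv R s =
      ε • (deriv (fun x => ∑ j : Fin 6, x ^ (j : ℕ) • c j) (ε * s) - v) := by
    intro s
    simp only [R, ← iteratedDeriv_one, iteratedDeriv_sum_pow_smul]
    simp only [Fin.sum_univ_six, b, Fin.coe_ofNat_eq_mod, Nat.reduceMod, Nat.descFactorial,
      Nat.reduceSub, Matrix.cons_val]
    module
  have hR2 : ∀ s, iteratedDeriv 2 R s =
      ε ^ 2 • iteratedDeriv 2 (fun x => ∑ j : Fin 6, x ^ (j : ℕ) • c j) (ε * s) := by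
    intro s
    simp only [R, iteratedDeriv_sum_pow_smul]
    simp only [Fin.sum_univ_six, b, Fin.coe_ofNat_eq_mod, Nat.reduceMod, Nat.descFactorial,
      Nat.reduceSub, Matrix.cons_val]
    module
  have hdata : ∀ k ≤ 2, ∀ s ∈ ({-1, 1} : Set ℝ), ‖iteratedDeriv k R s‖ ≤ δ * ε ^ 2 := by
    intro k hk s hs
    obtain ⟨hY, hD, hS⟩ := h (ε * s) (by rcases hs with rfl | rfl <;> simp)
    have habs : |ε * s| = ε := by rcases hs with rfl | rfl <;> simp [hε.le]
    have hsq : (ε * s) ^ 2 = ε ^ 2 := by rw [← sq_abs, habs]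
    interval_cases k
    · rw [iteratedDeriv_zero, hR0, ← hsq]
      exact hY
    · rw [iteratedDeriv_one, hR1, norm_smul, Real.norm_of_nonneg hε.le]
      rw [habs] at hD
      exact (mul_le_mul_of_nonneg_left hD hε.le).trans_eq (by ring)
    · rw [hR2, norm_smul, Real.norm_of_nonneg (by positivity), mul_comm δ]
      exact mul_le_mul_of_nonneg_left hS (by positivity)
  have ht : |a / ε| ≤ 1 := by
    rw [abs_div, abs_of_pos hε, div_le_one hε, abs_le]
    exact ha
  have key := norm_deriv_quintic_le_of_hermite_data b hdata ht
  rw [hR1, mul_div_cancel₀ a hε.ne', norm_smul, Real.norm_of_nonneg hε.le] at key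
  exact le_of_mul_le_mul_left (key.trans_eq (by ring)) hε

theorem norm_sub_le_of_norm_deriv_le_of_abs_le {f : ℝ → E} (hf : Differentiable ℝ f) {x K : ℝ}
    (h : ∀ y, |y| ≤ |x| → ‖deriv f y‖ ≤ K) : ‖f x - f 0‖ ≤ K * |x| := by
  simpa using (convex_closedBall (0 : ℝ) |x|).norm_image_sub_le_of_norm_deriv_le
    (fun y _ => hf y) (fun y hy => h y (by simpa using hy))
    (Metric.mem_closedBall_self (abs_nonneg x)) (by simp)

theorem ContDiff.eventually_taylor_bounds {g : ℝ → E} (hg : ContDiff ℝ 2 g) :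
    ∀ᶠ M in atTop, ∀ x, |x| ≤ 1 →
      ‖g x - g 0 - x • deriv g 0‖ ≤ M * x ^ 2 ∧ ‖deriv g x - deriv g 0‖ ≤ M * |x| ∧
        ‖iteratedDeriv 2 g x‖ ≤ M := by
  obtain ⟨M₀, hM₀⟩ := (isCompact_Icc (a := (-1 : ℝ)) (b := 1)).exists_bound_of_continuousOn
    (hg.continuous_iteratedDeriv 2 le_rfl).continuousOn
  filter_upwards [eventually_ge_atTop M₀] with M hM
  have h2 : ∀ x, |x| ≤ 1 → ‖iteratedDeriv 2 g x‖ ≤ M :=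
    fun x hx => (hM₀ x (abs_le.mp hx)).trans hM
  have h1 : ∀ x, |x| ≤ 1 → ‖deriv g x - deriv g 0‖ ≤ M * |x| := by
    intro x hx
    refine norm_sub_le_of_norm_deriv_le_of_abs_le ?_ fun y hy => ?_
    · simpa only [iteratedDeriv_one] using hg.differentiable_iteratedDeriv 1 (by norm_num)
    · have := h2 y (hy.trans hx)
      rwa [iteratedDeriv_succ, iteratedDeriv_one] at this
  refine fun x hx => ⟨?_, h1 x hx, h2 x hx⟩
  have hM0 : 0 ≤ M := (norm_nonneg _).trans (h2 0 (by simp))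
  have hd : ∀ y, HasDerivAt (fun y => g y - y • deriv g 0) (deriv g y - deriv g 0) y := by
    intro y
    simpa using ((hg.differentiable (by norm_num) y).hasDerivAt).fun_sub
      ((hasDerivAt_id y).smul_const (deriv g 0))
  have := norm_sub_le_of_norm_deriv_le_of_abs_le (fun y => (hd y).differentiableAt)
    (x := x) (K := M * |x|) fun y hy => by
      rw [(hd y).deriv]
      exact (h1 y (hy.trans hx)).trans (by gcongr)
  simp only [zero_smul, sub_zero] at this
  rwa [sub_right_comm, mul_assoc, ← sq, sq_abs] at this

end

/-- **First-order estimate for quintic Hermite smoothing (Lemma `secondorder`, part 2).**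
With `g₋, g₊, F` as before (`C³`, matching value and first derivative at `0`), there is
`C > 0` such that for every `ε ∈ (0,1]`, every quintic Hermite interpolant `P` of `F`
on `[−ε, ε]`, and every `a ∈ [−ε, ε]`, `‖P'(a) − g₊'(0)‖ ≤ C·ε` (where
`g₊'(0) = g₋'(0)` is the common derivative of `F` at `0`). -/
theorem quintic_hermite_deriv_estimate
    {E : Type*} [NormedAddCommGroup E] [NormedSpace ℝ E]
    (gm gp : ℝ → E) (hgm : ContDiff ℝ 3 gm) (hgp : ContDiff ℝ 3 gp)
    (h0 : gm 0 = gp 0) (h1 : deriv gm 0 = deriv gp 0)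
    (F : ℝ → E) (hFm : ∀ a : ℝ, a ≤ 0 → F a = gm a) (hFp : ∀ a : ℝ, 0 ≤ a → F a = gp a) :
    ∃ C > 0, ∀ ε ∈ Set.Ioc (0 : ℝ) 1, ∀ P : ℝ → E,
      ((∃ c : Fin 6 → E, ∀ a : ℝ, P a = ∑ j : Fin 6, a ^ (j : ℕ) • c j) ∧
        P (-ε) = F (-ε) ∧ P ε = F ε ∧
        deriv P (-ε) = deriv gm (-ε) ∧ deriv P ε = deriv gp ε ∧
        iteratedDeriv 2 P (-ε) = iteratedDeriv 2 gm (-ε) ∧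
        iteratedDeriv 2 P ε = iteratedDeriv 2 gp ε) →
      ∀ a ∈ Set.Icc (-ε) ε, ‖deriv P a - deriv gp 0‖ ≤ C * ε := by
  obtain ⟨M, hM, hm, hp⟩ := ((eventually_gt_atTop 0).and
    ((hgm.of_le (by norm_num)).eventually_taylor_bounds.and
      (hgp.of_le (by norm_num)).eventually_taylor_bounds)).exists
  refine ⟨37 / 2 * M, by positivity, ?_⟩
  rintro ε ⟨hε, hε1⟩ P ⟨hP, hPm, hPp, hDm, hDp, hSm, hSp⟩ a ha
  refine norm_deriv_quintic_sub_le_of_hermite_data hP hε (gp 0) (deriv gp 0) ?_ ha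
  rintro s (rfl | hs)
  · rw [hPm, hFm _ (by linarith), hDm, hSm, ← h0, ← h1]
    exact hm (-ε) (by rw [abs_neg, abs_of_pos hε]; exact hε1)
  · rw [Set.mem_singleton_iff.mp hs, hPp, hFp _ hε.le, hDp, hSp]
    exact hp ε (by rw [abs_of_pos hε]; exact hε1)
end
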